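/- Let P be a set of tests and p ∈ P. Then p is ≺-minimal in P if and only if there exists a cost function K for tests that attains its minimum over P at p, i.e. K(L p, T p, N p) ≤ K(L p', T p', N p') for all p' ∈ P. -/

import Mathlib

/-!
A cost function that is strictly monotone in each argument strictly decreases along `≺`, so its
minimisers are `≺`-minimal. Conversely, for a `≺`-minimal `p` take the total `l + t + n` and add
the cost of `p` as a penalty on every test that is not `⪯ p`: tests `⪯ p` in `P` are `⪰ p` by
minimality and cost at least as much as `p` by monotonicity, all others pay the penalty.
-/

open scoped NNReal

/-- `⪯` for tests: cheaper or equal in length, time, and number of runs. -/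
def testLE {X : Type*} (L : X → ℕ) (T N : X → ℝ≥0) (p₁ p₂ : X) : Prop :=
  L p₁ ≤ L p₂ ∧ T p₁ ≤ T p₂ ∧ N p₁ ≤ N p₂

/-- `≺` for tests: always cheaper. -/
def testLT {X : Type*} (L : X → ℕ) (T N : X → ℝ≥0) (p₁ p₂ : X) : Prop :=
  testLE L T N p₁ p₂ ∧ ¬ testLE L T N p₂ p₁

/-- A cost function for tests: strictly monotone in each of its three arguments. -/
def IsTestCostFunction (K : ℕ → ℝ≥0 → ℝ≥0 → ℝ≥0) : Prop :=
  (∀ l l' t n, l < l' → K l t n < K l' t n) ∧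
  (∀ l t t' n, t < t' → K l t n < K l t' n) ∧
  (∀ l t n n', n < n' → K l t n < K l t n')

/-- `p` is `≺`-minimal in `P`. -/
def TestMinimal {X : Type*} (L : X → ℕ) (T N : X → ℝ≥0) (P : Set X) (p : X) : Prop :=
  p ∈ P ∧ ¬ ∃ p' ∈ P, testLT L T N p' p

namespace IsTestCostFunction

variable {K : ℕ → ℝ≥0 → ℝ≥0 → ℝ≥0} {l l' : ℕ} {t t' n n' : ℝ≥0}

theorem le_of_le (hK : IsTestCostFunction K) (hl : l ≤ l') (ht : t ≤ t') (hn : n ≤ n') : K l t n ≤ K l' t' n' :=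
  calc K l t n ≤ K l' t n := (StrictMono.monotone fun _ _ h => hK.1 _ _ t n h) hl
    _ ≤ K l' t' n := (StrictMono.monotone fun _ _ h => hK.2.1 l' _ _ n h) ht
    _ ≤ K l' t' n' := (StrictMono.monotone fun _ _ h => hK.2.2 l' t' _ _ h) hn

theorem lt_of_le_of_not_le (hK : IsTestCostFunction K) (hl : l ≤ l') (ht : t ≤ t') (hn : n ≤ n')
    (hstrict : ¬ (l' ≤ l ∧ t' ≤ t ∧ n' ≤ n)) : K l t n < K l' t' n' := by
  simp only [not_and_or, not_le] at hstrict
  rcases hstrict with hl' | ht' | hn'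
  · exact (hK.1 _ _ _ _ hl').trans_le (hK.le_of_le le_rfl ht hn)
  · exact (hK.le_of_le hl le_rfl le_rfl).trans_lt ((hK.2.1 _ _ _ _ ht').trans_le
      (hK.le_of_le le_rfl le_rfl hn))
  · exact (hK.le_of_le hl ht le_rfl).trans_lt (hK.2.2 _ _ _ _ hn')

theorem lt_of_testLT {X : Type*} {L : X → ℕ} {T N : X → ℝ≥0} {p₁ p₂ : X}
    (hK : IsTestCostFunction K) (h : testLT L T N p₁ p₂) : K (L p₁) (T p₁) (N p₁) < K (L p₂) (T p₂) (N p₂) :=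
  hK.lt_of_le_of_not_le h.1.1 h.1.2.1 h.1.2.2 h.2

end IsTestCostFunction

theorem TestMinimal.testLE_of_testLE {X : Type*} {L : X → ℕ} {T N : X → ℝ≥0} {P : Set X}
    {p p' : X} (hmin : TestMinimal L T N P p) (hp' : p' ∈ P) (h : testLE L T N p' p) :
    testLE L T N p p' :=
  not_not.mp fun h' => hmin.2 ⟨p', hp', h, h'⟩

noncomputable def penalizedCost (l₀ : ℕ) (t₀ n₀ : ℝ≥0) (l : ℕ) (t n : ℝ≥0) : ℝ≥0 :=
  (l + t + n) + if l ≤ l₀ ∧ t ≤ t₀ ∧ n ≤ n₀ then 0 else (l₀ + t₀ + n₀)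

theorem isTestCostFunction_penalizedCost (l₀ : ℕ) (t₀ n₀ : ℝ≥0) :
    IsTestCostFunction (penalizedCost l₀ t₀ n₀) := by
  have penalty_mono : ∀ {l l' : ℕ} {t t' n n' : ℝ≥0}, l ≤ l' → t ≤ t' → n ≤ n' →
      (if l ≤ l₀ ∧ t ≤ t₀ ∧ n ≤ n₀ then 0 else (l₀ + t₀ + n₀ : ℝ≥0)) ≤
        if l' ≤ l₀ ∧ t' ≤ t₀ ∧ n' ≤ n₀ then 0 else (l₀ + t₀ + n₀ : ℝ≥0) := by
    intro l l' t t' n n' hl ht hn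
    split_ifs with h h' h'
    · exact le_rfl
    · exact zero_le
    · exact absurd ⟨hl.trans h'.1, ht.trans h'.2.1, hn.trans h'.2.2⟩ h
    · exact le_rfl
  refine ⟨fun l l' t n h => add_lt_add_of_lt_of_le ?_ (penalty_mono h.le le_rfl le_rfl),
    fun l t t' n h => add_lt_add_of_lt_of_le ?_ (penalty_mono le_rfl h.le le_rfl),
    fun l t n n' h => add_lt_add_of_lt_of_le ?_ (penalty_mono le_rfl le_rfl h.le)⟩
  all_goals gcongr

theorem penalizedCost_self_le {l₀ l : ℕ} {t₀ n₀ t n : ℝ≥0}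
    (h : ¬ (l ≤ l₀ ∧ t ≤ t₀ ∧ n ≤ n₀)) :
    penalizedCost l₀ t₀ n₀ l₀ t₀ n₀ ≤ penalizedCost l₀ t₀ n₀ l t n := by
  simp only [penalizedCost, le_refl, and_self, if_true, if_neg h, add_zero]
  exact le_add_self

theorem test_minimal_iff_cost_min {X : Type*} (L : X → ℕ) (T N : X → ℝ≥0)
    (P : Set X) (p : X) (hp : p ∈ P) :
    TestMinimal L T N P p ↔
      ∃ K : ℕ → ℝ≥0 → ℝ≥0 → ℝ≥0, IsTestCostFunction K ∧
        ∀ p' ∈ P, K (L p) (T p) (N p) ≤ K (L p') (T p') (N p') := by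
  constructor
  · intro hmin
    have hK := isTestCostFunction_penalizedCost (L p) (T p) (N p)
    refine ⟨_, hK, fun p' hp' => ?_⟩
    by_cases hle : testLE L T N p' p
    · obtain ⟨hl, ht, hn⟩ := hmin.testLE_of_testLE hp' hle
      exact hK.le_of_le hl ht hn
    · exact penalizedCost_self_le hle
  · rintro ⟨K, hK, hKmin⟩
    exact ⟨hp, fun ⟨p', hp', hlt⟩ => (hKmin p' hp').not_gt (hK.lt_of_testLT hlt)⟩
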